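/- With E(a,b,c) the block derangement number, (a-b)(a+b-c)·E(a,b,c) + a(a-b-c-1)·E(a-1,b,c) + b(a-b+c+1)·E(a,b-1,c) = 0 for all natural numbers a, b ≥ 1 and c ≥ 0. -/

import Mathlib

open Finset

/-- The binomial sum for block derangements of three players,
when the third argument is the largest. The sum is automatically `0`
when the triangle inequality `c ≤ a + b` fails. -/
def Eaux (a b c : ℕ) : ℤ :=
  ∑ k ∈ Finset.range (a + b - c + 1),
    (a.choose k : ℤ) * (b.choose (c - a + k)) * (c.choose (b - k))

/-- The block derangement number `E(a,b,c)`: the binomial sum applied with the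
largest argument placed last. -/
def E3 (a b c : ℕ) : ℤ :=
  if a ≤ c ∧ b ≤ c then Eaux a b c
  else if a ≤ b ∧ c ≤ b then Eaux a c b
  else Eaux b c a

/-!
Extend the summand `C(a,k) C(b,c-a+k) C(c,b-k)` to all `k` with binomials of integer lower
index (zero below `0`). The extended sum is symmetric in `a, b, c` (reflect `k ↦ a - k`,
resp. `k ↦ b - k`), so it equals `E` whichever argument is largest.

The recurrence holds summand by summand up to a telescoping term: the left-hand side at `k` is
`G (k + 1) - G k` with `G k = (b - a) k T k`, `T` the summand. After the shifts `a - 1`, `b - 1`,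
`k + 1` every term is `C(a,k)` times one of `C(b,j), C(b,j+1)` times one of `C(c,m), C(c,m-1)`
(`j = c - a + k`, `m = b - k`). These pairs are proportional to `(j + 1, b - j)` and
`(c - m + 1, m)`, and on those vectors the identity is a polynomial one.
-/

def zchoose (n : ℕ) (j : ℤ) : ℤ := if 0 ≤ j then (n.choose j.toNat : ℤ) else 0

lemma zchoose_of_neg {n : ℕ} {j : ℤ} (h : j < 0) : zchoose n j = 0 := by
  simp [zchoose, not_le.mpr h]

@[simp]
lemma zchoose_natCast (n k : ℕ) : zchoose n k = n.choose k := by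
  simp [zchoose]

lemma zchoose_of_lt {n : ℕ} {j : ℤ} (h : (n : ℤ) < j) : zchoose n j = 0 := by
  lift j to ℕ using (by omega)
  rw [zchoose_natCast, Nat.choose_eq_zero_of_lt (by omega), Nat.cast_zero]

lemma zchoose_sub (n : ℕ) (j : ℤ) : zchoose n (n - j) = zchoose n j := by
  rcases lt_or_ge j 0 with hj | hj
  · rw [zchoose_of_neg hj, zchoose_of_lt (by omega)]
  rcases le_or_gt j n with hjn | hjn
  · lift j to ℕ using hj
    rw [← Nat.cast_sub (by omega), zchoose_natCast, zchoose_natCast, Nat.choose_symm (by omega)]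
  · rw [zchoose_of_lt hjn, zchoose_of_neg (by omega)]

lemma add_one_mul_zchoose_add_one (n : ℕ) (j : ℤ) :
    (j + 1) * zchoose n (j + 1) = (n - j) * zchoose n j := by
  rcases lt_or_ge j 0 with hj | hj
  · rw [zchoose_of_neg hj, mul_zero]
    rcases lt_or_ge (j + 1) 0 with hj' | hj'
    · rw [zchoose_of_neg hj', mul_zero]
    · rw [show j + 1 = 0 by omega, zero_mul]
  lift j to ℕ using hj with k
  rcases le_or_gt k n with hk | hk
  · have h := Nat.choose_succ_right_eq n k
    zify [hk] at h
    rw [← Nat.cast_add_one, zchoose_natCast, zchoose_natCast]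
    push_cast
    linear_combination h
  · rw [← Nat.cast_add_one, zchoose_natCast, zchoose_natCast, Nat.choose_eq_zero_of_lt hk,
      Nat.choose_eq_zero_of_lt (by omega)]
    simp

lemma natCast_mul_zchoose_sub_one (n : ℕ) (j : ℤ) :
    (n : ℤ) * zchoose (n - 1) j = (n - j) * zchoose n j := by
  rcases lt_or_ge j 0 with hj | hj
  · simp [zchoose_of_neg hj]
  lift j to ℕ using hj with k
  cases n with
  | zero =>
    rw [zchoose_natCast]
    rcases k with _ | k <;> simp
  | succ n =>
    rcases le_or_gt k (n + 1) with hk | hk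
    · have h := Nat.choose_mul_succ_eq n k
      zify [hk] at h
      rw [Nat.add_sub_cancel, zchoose_natCast, zchoose_natCast]
      push_cast
      linear_combination h
    · rw [zchoose_natCast, zchoose_natCast, Nat.choose_eq_zero_of_lt (by omega),
        Nat.choose_eq_zero_of_lt hk]
      simp

lemma exists_mul_eq_of_mul_eq_mul {R : Type*} [CommRing R] {p q x y : R}
    (h : p * y = q * x) (hpq : p ≠ 0 ∨ q ≠ 0) :
    ∃ s t : R, s ≠ 0 ∧ s * x = t * p ∧ s * y = t * q := by
  by_cases hp : p = 0
  · subst hp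
    have hx : q * x = 0 := by rw [← h, zero_mul]
    exact ⟨q, y, hpq.resolve_left (not_not.mpr rfl), by rw [hx, mul_zero], mul_comm q y⟩
  · exact ⟨p, x, hp, mul_comm p x, by rw [h, mul_comm q x]⟩

lemma bilinear_eq_zero_of_proportional {R : Type*} [CommRing R] [IsDomain R] (α β γ δ : R)
    {p q x y p' q' x' y' : R} (hxy : p * y = q * x) (hpq : p ≠ 0 ∨ q ≠ 0)
    (hxy' : p' * y' = q' * x') (hpq' : p' ≠ 0 ∨ q' ≠ 0)
    (h : α * p * p' + β * q * p' + γ * p * q' + δ * q * q' = 0) :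
    α * x * x' + β * y * x' + γ * x * y' + δ * y * y' = 0 := by
  obtain ⟨s, t, hs, hx, hy⟩ := exists_mul_eq_of_mul_eq_mul hxy hpq
  obtain ⟨s', t', hs', hx', hy'⟩ := exists_mul_eq_of_mul_eq_mul hxy' hpq'
  have key : s * s' * (α * x * x' + β * y * x' + γ * x * y' + δ * y * y') = 0 :=
    calc s * s' * (α * x * x' + β * y * x' + γ * x * y' + δ * y * y')
        = α * (s * x) * (s' * x') + β * (s * y) * (s' * x') + γ * (s * x) * (s' * y')
          + δ * (s * y) * (s' * y') := by ring
      _ = t * t' * (α * p * p' + β * q * p' + γ * p * q' + δ * q * q') := by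
          rw [hx, hy, hx', hy']; ring
      _ = 0 := by rw [h, mul_zero]
  exact (mul_eq_zero.mp key).resolve_left (mul_ne_zero hs hs')

def blockTerm (a b c k : ℕ) : ℤ :=
  zchoose a k * zchoose b ((c : ℤ) - a + k) * zchoose c ((b : ℤ) - k)

def blockSum (a b c : ℕ) : ℤ := ∑ k ∈ range (a + 1), blockTerm a b c k

lemma natCast_mul_blockTerm_sub_one_left (a b c k : ℕ) :
    (a : ℤ) * blockTerm (a - 1) b c k =
      (a - k) * zchoose a k * zchoose b ((c : ℤ) - a + k + 1) * zchoose c ((b : ℤ) - k) := by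
  have h := natCast_mul_zchoose_sub_one a k
  rcases Nat.eq_zero_or_pos a with rfl | ha
  · simp only [Nat.cast_zero, zero_mul] at h ⊢
    linear_combination ((zchoose b ((c : ℤ) - 0 + k + 1) * zchoose c ((b : ℤ) - k))) * h
  · rw [blockTerm, Nat.cast_pred ha, show (c : ℤ) - (a - 1) + k = c - a + k + 1 by ring]
    linear_combination (zchoose b ((c : ℤ) - a + k + 1) * zchoose c ((b : ℤ) - k)) * h

lemma natCast_mul_blockTerm_sub_one_middle (a b c k : ℕ) :
    (b : ℤ) * blockTerm a (b - 1) c k =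
      zchoose a k * ((b - (c - a + k)) * zchoose b ((c : ℤ) - a + k))
        * zchoose c ((b : ℤ) - k - 1) := by
  have h := natCast_mul_zchoose_sub_one b ((c : ℤ) - a + k)
  rcases Nat.eq_zero_or_pos b with rfl | hb
  · simp only [Nat.cast_zero, zero_mul] at h ⊢
    linear_combination ((zchoose a k * zchoose c ((0 : ℤ) - k - 1))) * h
  · rw [blockTerm, Nat.cast_pred hb, show (b : ℤ) - 1 - k = b - k - 1 by ring]
    linear_combination (zchoose a k * zchoose c ((b : ℤ) - k - 1)) * h

lemma add_one_mul_blockTerm_add_one (a b c k : ℕ) :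
    ((k : ℤ) + 1) * blockTerm a b c (k + 1) =
      (a - k) * zchoose a k * zchoose b ((c : ℤ) - a + k + 1) * zchoose c ((b : ℤ) - k - 1) := by
  have h := add_one_mul_zchoose_add_one a k
  rw [blockTerm, Nat.cast_add_one, show (c : ℤ) - a + (k + 1) = c - a + k + 1 by ring,
    show (b : ℤ) - (k + 1) = b - k - 1 by ring]
  linear_combination (zchoose b ((c : ℤ) - a + k + 1) * zchoose c ((b : ℤ) - k - 1)) * h

lemma blockTerm_recurrence (a b c k : ℕ) :
    ((a : ℤ) - b) * ((a : ℤ) + b - c) * blockTerm a b c k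
      + (a : ℤ) * ((a : ℤ) - b - c - 1) * blockTerm (a - 1) b c k
      + (b : ℤ) * ((a : ℤ) - b + c + 1) * blockTerm a (b - 1) c k
    = ((b : ℤ) - a) * ((k : ℤ) + 1) * blockTerm a b c (k + 1)
      - ((b : ℤ) - a) * k * blockTerm a b c k := by
  set j : ℤ := (c : ℤ) - a + k
  set m : ℤ := (b : ℤ) - k
  have hB := add_one_mul_zchoose_add_one b j
  have hC : ((c : ℤ) - (m - 1)) * zchoose c (m - 1) = m * zchoose c m := by
    have h := add_one_mul_zchoose_add_one c (m - 1)
    rw [sub_add_cancel] at h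
    exact h.symm
  have hQ := bilinear_eq_zero_of_proportional (R := ℤ)
    ((a - b) * (a + b - c) + (b - a) * k) ((a - b - c - 1) * (a - k))
    ((a - b + c + 1) * (b - j)) (-(b - a) * (a - k)) hB (by omega) hC (by omega) (by ring)
  rw [blockTerm]
  linear_combination ((a : ℤ) - b - c - 1) * natCast_mul_blockTerm_sub_one_left a b c k
    + ((a : ℤ) - b + c + 1) * natCast_mul_blockTerm_sub_one_middle a b c k
    - ((b : ℤ) - a) * add_one_mul_blockTerm_add_one a b c k + zchoose a k * hQ

lemma blockTerm_eq_zero {a b c k : ℕ} (h : a < k ∨ b < k) : blockTerm a b c k = 0 := by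
  rcases h with h | h
  · rw [blockTerm, zchoose_natCast, Nat.choose_eq_zero_of_lt h]; simp
  · rw [blockTerm, zchoose_of_neg (n := c) (by omega), mul_zero]

lemma blockSum_eq_sum_range {a b c N : ℕ} (h : min a b < N) :
    blockSum a b c = ∑ k ∈ range N, blockTerm a b c k := by
  have hsub {M : ℕ} (hM : min a b < M) (hM' : M ≤ max (a + 1) N) :
      ∑ k ∈ range M, blockTerm a b c k = ∑ k ∈ range (max (a + 1) N), blockTerm a b c k :=
    sum_subset (range_subset_range.mpr hM') fun k _ hk ↦
      blockTerm_eq_zero (by simp only [mem_range] at hk; omega)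
  rw [blockSum, hsub (by omega) (by omega), hsub h (by omega)]

lemma blockSum_recurrence (a b c : ℕ) :
    ((a : ℤ) - b) * ((a : ℤ) + b - c) * blockSum a b c
      + (a : ℤ) * ((a : ℤ) - b - c - 1) * blockSum (a - 1) b c
      + (b : ℤ) * ((a : ℤ) - b + c + 1) * blockSum a (b - 1) c = 0 := by
  let G (k : ℕ) : ℤ := ((b : ℤ) - a) * k * blockTerm a b c k
  rw [blockSum, blockSum_eq_sum_range (N := a + 1) (by omega),
    blockSum_eq_sum_range (N := a + 1) (by omega), mul_sum, mul_sum, mul_sum,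
    ← sum_add_distrib, ← sum_add_distrib]
  calc _ = ∑ k ∈ range (a + 1), (G (k + 1) - G k) := by
        refine sum_congr rfl fun k _ ↦ ?_
        simp only [G, blockTerm_recurrence, Nat.cast_add_one]
    _ = 0 := by
        rw [sum_range_sub]
        simp [G, blockTerm_eq_zero (Or.inl (Nat.lt_succ_self a))]

lemma blockSum_swap_right (a b c : ℕ) : blockSum a b c = blockSum a c b := by
  rw [blockSum, blockSum, ← sum_range_reflect]
  refine sum_congr rfl fun k hk ↦ ?_
  have hk : k ≤ a := Nat.lt_succ_iff.mp (mem_range.mp hk)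
  rw [Nat.add_sub_cancel, blockTerm, blockTerm, zchoose_natCast, Nat.choose_symm hk,
    ← zchoose_natCast, Nat.cast_sub hk]
  ring_nf

lemma blockSum_swap_outer (a b c : ℕ) : blockSum a b c = blockSum c b a := by
  rw [blockSum_eq_sum_range (N := b + 1) (by omega), blockSum_eq_sum_range (N := b + 1) (by omega),
    ← sum_range_reflect]
  refine sum_congr rfl fun k hk ↦ ?_
  have hk : k ≤ b := Nat.lt_succ_iff.mp (mem_range.mp hk)
  rw [Nat.add_sub_cancel, blockTerm, blockTerm, Nat.cast_sub hk,
    show (c : ℤ) - a + (b - k) = b - (a - c + k) by ring, zchoose_sub,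
    show (b : ℤ) - (b - k) = k by ring]
  ring

lemma blockSum_swap_left (a b c : ℕ) : blockSum a b c = blockSum b a c := by
  rw [blockSum_swap_outer, blockSum_swap_right, blockSum_swap_outer]

lemma Eaux_eq_blockSum {a b c : ℕ} (hac : a ≤ c) (hbc : b ≤ c) : Eaux a b c = blockSum a b c := by
  have htrunc : blockSum a b c = ∑ k ∈ range (a + b - c + 1), blockTerm a b c k := by
    refine (sum_subset (range_subset_range.mpr (by omega)) fun k _ hk ↦ ?_).symm
    simp only [mem_range, not_lt] at hk
    rw [blockTerm, zchoose_of_lt (n := b) (by omega), mul_zero, zero_mul]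
  rw [htrunc, Eaux]
  refine sum_congr rfl fun k hk ↦ ?_
  simp only [mem_range] at hk
  rw [blockTerm, show (c : ℤ) - a + k = ((c - a + k : ℕ) : ℤ) by omega,
    show (b : ℤ) - k = ((b - k : ℕ) : ℤ) by omega]
  simp only [zchoose_natCast]

lemma E3_eq_blockSum (a b c : ℕ) : E3 a b c = blockSum a b c := by
  rw [E3]
  split_ifs with h₁ h₂
  · exact Eaux_eq_blockSum h₁.1 h₁.2
  · rw [Eaux_eq_blockSum h₂.1 h₂.2, blockSum_swap_right]
  · rw [Eaux_eq_blockSum (by omega) (by omega), blockSum_swap_right, blockSum_swap_left]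

theorem stmt11_general (a b c : ℕ) :
    ((a : ℤ) - b) * ((a : ℤ) + b - c) * E3 a b c +
      (a : ℤ) * ((a : ℤ) - b - c - 1) * E3 (a - 1) b c +
      (b : ℤ) * ((a : ℤ) - b + c + 1) * E3 a (b - 1) c = 0 := by
  simp only [E3_eq_blockSum]
  exact blockSum_recurrence a b c

theorem stmt11 (a b c : ℕ) (ha : 1 ≤ a) (hb : 1 ≤ b) :
    ((a : ℤ) - b) * ((a : ℤ) + b - c) * E3 a b c +
      (a : ℤ) * ((a : ℤ) - b - c - 1) * E3 (a - 1) b c +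
      (b : ℤ) * ((a : ℤ) - b + c + 1) * E3 a (b - 1) c = 0 :=
  stmt11_general a b c
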